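/- arXiv:2212.06988 — 2 statements merged into one kernel-verified Lean document; each statement's English description precedes it below -/
import Mathlib

section
/- With learning rates α_t = (H+1)/(H+t), the weights α_t^i := α_i ∏_{j=i+1}^t (1 − α_j) satisfy ∑_{i=1}^t α_t^i / √i ≤ 2/√t for every t ≥ 1. -/
open Finset

/-!
Write `S_t = ∑_{i=1}^t α_t^i / √i`. Peeling the factor `1 - α_{t+1}` off every weight gives the
recursion `S_{t+1} = (1 - α_{t+1}) S_t + α_{t+1} / √(t+1)`, so `S_t ≤ 2 / √t` follows by induction
once `2 / √t` is a supersolution of this recursion. Since `1 - α_{t+1} = t / (H + t + 1)`, that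
amounts to `2 √t √(t+1) ≤ 2t + 1`, which is AM-GM.
-/

section StepWeights

variable {R : Type*} [CommRing R]

theorem sum_Icc_mul_prod_one_sub_succ (a f : ℕ → R) (t : ℕ) :
    ∑ i ∈ Icc 1 (t + 1), a i * (∏ j ∈ Icc (i + 1) (t + 1), (1 - a j)) * f i =
      (1 - a (t + 1)) * ∑ i ∈ Icc 1 t, a i * (∏ j ∈ Icc (i + 1) t, (1 - a j)) * f i +
        a (t + 1) * f (t + 1) := by
  rw [sum_Icc_succ_top (by omega), Icc_eq_empty (show ¬t + 1 + 1 ≤ t + 1 by omega), prod_empty,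
    mul_one, mul_sum]
  congr 1
  refine sum_congr rfl fun i hi => ?_
  rw [prod_Icc_succ_top (by grind)]
  ring

theorem sum_Icc_mul_prod_one_sub_le [PartialOrder R] [IsOrderedRing R] {a f g : ℕ → R}
    (ha : ∀ t, a (t + 1) ≤ 1) (hg : 0 ≤ g 0)
    (hstep : ∀ t, (1 - a (t + 1)) * g t + a (t + 1) * f (t + 1) ≤ g (t + 1)) (t : ℕ) :
    ∑ i ∈ Icc 1 t, a i * (∏ j ∈ Icc (i + 1) t, (1 - a j)) * f i ≤ g t := by
  induction t with
  | zero => simpa using hg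
  | succ t ih =>
    rw [sum_Icc_mul_prod_one_sub_succ]
    exact le_trans (by gcongr; exact sub_nonneg.2 (ha t)) (hstep t)

end StepWeights

theorem qlearning_step_two_div_sqrt_le (H t : ℕ) :
    (1 - ((H : ℝ) + 1) / (H + (t + 1 : ℕ))) * (2 / √t) +
        ((H : ℝ) + 1) / (H + (t + 1 : ℕ)) * (√(t + 1 : ℕ))⁻¹ ≤ 2 / √(t + 1 : ℕ) := by
  push_cast
  have hD : (0 : ℝ) < H + (t + 1) := by positivity
  have hy : 0 < √((t : ℝ) + 1) := Real.sqrt_pos.2 (by positivity)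
  have one_sub_step : 1 - ((H : ℝ) + 1) / (H + (t + 1)) = t / (H + (t + 1)) := by
    field_simp
    ring
  have amgm : 2 * √(t : ℝ) * √((t : ℝ) + 1) ≤ 2 * t + 1 := by
    have := two_mul_le_add_sq √(t : ℝ) √((t : ℝ) + 1)
    rwa [Real.sq_sqrt (by positivity), Real.sq_sqrt (by positivity), ← add_assoc, ← two_mul] at this
  have first_term : (t : ℝ) / (H + (t + 1)) * (2 / √t) = 2 * √t / (H + (t + 1)) := by
    calc (t : ℝ) / (H + (t + 1)) * (2 / √t) = 2 * ((t : ℝ) / √t) / (H + (t + 1)) := by ring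
      _ = 2 * √t / (H + (t + 1)) := by rw [Real.div_sqrt]
  rw [one_sub_step, first_term]
  field_simp
  nlinarith

theorem qlearning_weights_sum_div_sqrt_general (H : ℕ) (t : ℕ) :
    ∑ i ∈ Finset.Icc 1 t,
      (((H : ℝ) + 1) / ((H : ℝ) + i) *
        ∏ j ∈ Finset.Icc (i + 1) t, (1 - ((H : ℝ) + 1) / ((H : ℝ) + j))) / Real.sqrt i
    ≤ 2 / Real.sqrt t := by
  have step_le_one (t : ℕ) : ((H : ℝ) + 1) / (H + (t + 1 : ℕ)) ≤ 1 :=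
    div_le_one_of_le₀ (by push_cast; linarith [t.cast_nonneg (α := ℝ)]) (by positivity)
  simpa only [div_eq_mul_inv] using
    sum_Icc_mul_prod_one_sub_le (f := fun i => (√i)⁻¹) (g := fun t => 2 / √t) step_le_one
      (by simp) (qlearning_step_two_div_sqrt_le H) t

/-- For Q-learning step sizes `α_t = (H+1)/(H+t)`, the weights
`α_t^i = α_i ∏_{j=i+1}^t (1 - α_j)` satisfy
`∑_{i=1}^t α_t^i / √i ≤ 2 / √t` for every `t ≥ 1`. -/
theorem qlearning_weights_sum_div_sqrt (H : ℕ) (hH : 1 ≤ H) (t : ℕ) (ht : 1 ≤ t) :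
    ∑ i ∈ Finset.Icc 1 t,
      (((H : ℝ) + 1) / ((H : ℝ) + i) *
        ∏ j ∈ Finset.Icc (i + 1) t, (1 - ((H : ℝ) + 1) / ((H : ℝ) + j))) / Real.sqrt i
    ≤ 2 / Real.sqrt t :=
  qlearning_weights_sum_div_sqrt_general H t
end

section
/- For step sizes α_t = (H+1)/(H+t), the weights α_t^i satisfy ∑_{t=i}^∞ α_t^i ≤ 1 + 1/H for every i ≥ 1. -/
/-! With `α_t = (a+1)/(a+t)` and `P_k = ∏_{j=i+1}^{i+k} (1 - α_j)`, the quantity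
`Q_k = P_k (a+i+k)` satisfies `Q_{k+1} = P_k (i+k)`, hence `a P_k = Q_k - Q_{k+1}`.
The partial sums of `P_k` telescope to `((a+i) - Q_N)/a ≤ (a+i)/a`, and multiplying by
`α_i = (a+1)/(a+i)` gives the bound `(a+1)/a = 1 + 1/a`. -/

open Finset

namespace QLearning

noncomputable def stepSize (a : ℝ) (t : ℕ) : ℝ := (a + 1) / (a + t)

/-- The paper's weight is `α_{i+k}^i = stepSize a i * tailProd a i k`. -/
noncomputable def tailProd (a : ℝ) (i k : ℕ) : ℝ := ∏ j ∈ Icc (i + 1) (i + k), (1 - stepSize a j)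

variable {a : ℝ}

lemma stepSize_le_one (ha : 0 ≤ a) {t : ℕ} (ht : 1 ≤ t) : stepSize a t ≤ 1 := by
  have ht' : (1 : ℝ) ≤ t := by exact_mod_cast ht
  exact div_le_one_of_le₀ (by linarith) (by linarith)

lemma tailProd_nonneg (ha : 0 ≤ a) (i k : ℕ) : 0 ≤ tailProd a i k :=
  prod_nonneg fun j hj ↦
    sub_nonneg.mpr (stepSize_le_one ha (by have := (mem_Icc.mp hj).1; omega))

lemma tailProd_succ_mul (ha : 0 ≤ a) (i k : ℕ) :
    tailProd a i (k + 1) * (a + (i + k + 1)) = tailProd a i k * (i + k) := by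
  have hpos : 0 < a + (i + k + 1) := by positivity
  rw [tailProd, ← add_assoc, prod_Icc_succ_top (by omega), ← tailProd, stepSize]
  push_cast
  field_simp
  ring

lemma mul_sum_tailProd (ha : 0 ≤ a) (i N : ℕ) :
    a * ∑ k ∈ range N, tailProd a i k = (a + i) - tailProd a i N * (a + (i + N)) := by
  induction N with
  | zero => simp [tailProd]
  | succ N ih =>
    rw [sum_range_succ, mul_add, ih]
    push_cast
    linear_combination tailProd_succ_mul ha i N

lemma mul_sum_tailProd_le (ha : 0 ≤ a) (i N : ℕ) :
    a * ∑ k ∈ range N, tailProd a i k ≤ a + i := by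
  rw [mul_sum_tailProd ha]
  have : 0 ≤ tailProd a i N * (a + (i + N)) := mul_nonneg (tailProd_nonneg ha i N) (by positivity)
  linarith

theorem tsum_stepSize_mul_tailProd_le (ha : 0 < a) (i : ℕ) :
    ∑' k, stepSize a i * tailProd a i k ≤ 1 + 1 / a := by
  have hai : 0 < a + i := by positivity
  refine Real.tsum_le_of_sum_range_le
    (fun k ↦ mul_nonneg (by unfold stepSize; positivity) (tailProd_nonneg ha.le i k)) fun N ↦ ?_
  have hsum : ∑ k ∈ range N, tailProd a i k ≤ (a + i) / a := by
    rw [le_div_iff₀ ha, mul_comm]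
    exact mul_sum_tailProd_le ha.le i N
  calc ∑ k ∈ range N, stepSize a i * tailProd a i k
      = (a + 1) / (a + i) * ∑ k ∈ range N, tailProd a i k := by rw [← mul_sum, stepSize]
    _ ≤ (a + 1) / (a + i) * ((a + i) / a) := by gcongr
    _ = 1 + 1 / a := by field_simp

end QLearning

theorem qlearning_stepsize_weight_tail_sum_general (H : ℕ) (hH : 1 ≤ H)
    (i : ℕ) :
    ∑' k : ℕ,
        ((H : ℝ) + 1) / ((H : ℝ) + i) *
          ∏ j ∈ Finset.Icc (i + 1) (i + k), (1 - ((H : ℝ) + 1) / ((H : ℝ) + j))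
      ≤ 1 + 1 / (H : ℝ) :=
  QLearning.tsum_stepSize_mul_tailProd_le (by exact_mod_cast hH) i

/-- **Geometric-tail property of the Q-learning step-size weights.**
With `α_t = (H+1)/(H+t)` and `α_t^i = α_i ∏_{j=i+1}^t (1-α_j)`,
for every `i ≥ 1` we have `∑_{t=i}^∞ α_t^i ≤ 1 + 1/H`. -/
theorem qlearning_stepsize_weight_tail_sum (H : ℕ) (hH : 1 ≤ H)
    (i : ℕ) (hi : 1 ≤ i) :
    ∑' k : ℕ,
        ((H : ℝ) + 1) / ((H : ℝ) + i) *
          ∏ j ∈ Finset.Icc (i + 1) (i + k), (1 - ((H : ℝ) + 1) / ((H : ℝ) + j))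
      ≤ 1 + 1 / (H : ℝ) :=
  qlearning_stepsize_weight_tail_sum_general H hH i
end
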